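/- Let F be a field, n ≥ 1, and let M ∈ F^{n×n} be any matrix. Let Δ be the lower shift matrix and J the exchange matrix over F. Then rank(M J − Δ (M J) Δᵀ) ≤ rank(Δᵀ M − M Δ) + 1. -/

import Mathlib

open Matrix

/-- The lower shift matrix `Δ`, with ones just below the diagonal. -/
def shiftMatrix (R : Type*) [Zero R] [One R] (n : ℕ) : Matrix (Fin n) (Fin n) R :=
  Matrix.of fun j k => if (j : ℕ) = (k : ℕ) + 1 then 1 else 0

/-- The exchange (backward identity) matrix `J`, with ones on the antidiagonal. -/
def exchangeMatrix (R : Type*) [Zero R] [One R] (n : ℕ) : Matrix (Fin n) (Fin n) R :=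
  Matrix.of fun j k => if (j : ℕ) + (k : ℕ) + 1 = n then 1 else 0

/-!
Since `J Δᵀ = Δ J`, one has `M J - Δ (M J) Δᵀ = Δ (Δᵀ M - M Δ) J + (1 - Δ Δᵀ) M J`,
and `1 - Δ Δᵀ = e₁ e₁ᵀ` has rank at most one.
-/

theorem Matrix.rank_add_le {K m n : Type*} [Field K] [Fintype n] (A B : Matrix m n K) :
    (A + B).rank ≤ A.rank + B.rank := by
  have hrange : LinearMap.range (A + B).mulVecLin ≤
      LinearMap.range A.mulVecLin ⊔ LinearMap.range B.mulVecLin := by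
    rw [mulVecLin_add]
    exact LinearMap.range_add_le _ _
  exact (Submodule.finrank_mono hrange).trans (Submodule.finrank_add_le_finrank_add_finrank _ _)

theorem stein_displacement_eq_of_mul_eq {A : Type*} [Ring A] {d d' j : A} (h : j * d' = d * j)
    (m : A) : m * j - d * (m * j) * d' = d * (d' * m - m * d) * j + (1 - d * d') * m * j := by
  calc m * j - d * (m * j) * d' = m * j - d * m * (j * d') := by noncomm_ring
    _ = m * j - d * m * (d * j) := by rw [h]
    _ = d * (d' * m - m * d) * j + (1 - d * d') * m * j := by noncomm_ring

theorem Matrix.rank_stein_displacement_le {K ι : Type*} [Field K] [Fintype ι] [DecidableEq ι]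
    {D J : Matrix ι ι K} (h : J * Dᵀ = D * J) (M : Matrix ι ι K) :
    (M * J - D * (M * J) * Dᵀ).rank ≤ (Dᵀ * M - M * D).rank + (1 - D * Dᵀ).rank := by
  rw [stein_displacement_eq_of_mul_eq h]
  exact (rank_add_le _ _).trans <| add_le_add
    ((rank_mul_le_left _ _).trans (rank_mul_le_right _ _))
    ((rank_mul_le_left _ _).trans (rank_mul_le_left _ _))

theorem Fin.sum_ite_eq_val_add_one {R : Type*} [AddCommMonoid R] {n : ℕ} (k : ℕ)
    (f : Fin n → R) :
    ∑ m : Fin n, (if k = (m : ℕ) + 1 then f m else 0) =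
      if h : 0 < k ∧ k ≤ n then f ⟨k - 1, by omega⟩ else 0 := by
  split_ifs with h
  · rw [Fintype.sum_eq_single ⟨k - 1, by omega⟩
      fun m hm => if_neg fun hk => hm (by ext; simp only; omega)]
    exact if_pos (by simp only; omega)
  · exact Finset.sum_eq_zero fun m _ => if_neg (by omega)

theorem exchangeMatrix_mul_transpose_shiftMatrix (R : Type*) [NonAssocSemiring R] (n : ℕ) :
    exchangeMatrix R n * (shiftMatrix R n)ᵀ = shiftMatrix R n * exchangeMatrix R n := by
  ext j k
  simp only [mul_apply, shiftMatrix, of_apply, transpose_apply, mul_ite, ite_mul, mul_one,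
    mul_zero, one_mul, zero_mul, Fin.sum_ite_eq_val_add_one]
  simp only [exchangeMatrix, of_apply]
  split_ifs <;> first | rfl | omega

theorem rank_one_sub_shiftMatrix_mul_transpose_le (K : Type*) [Field K] (n : ℕ) :
    (1 - shiftMatrix K n * (shiftMatrix K n)ᵀ).rank ≤ 1 := by
  set e : Fin n → K := fun j => if (j : ℕ) = 0 then 1 else 0
  suffices 1 - shiftMatrix K n * (shiftMatrix K n)ᵀ = vecMulVec e e from
    this ▸ rank_vecMulVec_le e e
  ext j k
  simp only [mul_apply, shiftMatrix, of_apply, transpose_apply, ite_mul, one_mul, zero_mul,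
    Fin.sum_ite_eq_val_add_one, Matrix.sub_apply, one_apply, vecMulVec_apply, Fin.ext_iff, e]
  split_ifs <;> first | omega | simp

theorem stein_rank_of_MJ_le_general (F : Type*) [Field F] (n : ℕ)
    (M : Matrix (Fin n) (Fin n) F) :
    (M * exchangeMatrix F n -
        shiftMatrix F n * (M * exchangeMatrix F n) * (shiftMatrix F n)ᵀ).rank ≤
      ((shiftMatrix F n)ᵀ * M - M * shiftMatrix F n).rank + 1 :=
  (rank_stein_displacement_le (exchangeMatrix_mul_transpose_shiftMatrix F n) M).trans
    (add_le_add_right (rank_one_sub_shiftMatrix_mul_transpose_le F n) _)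

/-- Key rank inequality:
`rank(M J − Δ (M J) Δᵀ) ≤ rank(Δᵀ M − M Δ) + 1`. -/
theorem stein_rank_of_MJ_le (F : Type*) [Field F] (n : ℕ) (hn : 1 ≤ n)
    (M : Matrix (Fin n) (Fin n) F) :
    (M * exchangeMatrix F n -
        shiftMatrix F n * (M * exchangeMatrix F n) * (shiftMatrix F n)ᵀ).rank ≤
      ((shiftMatrix F n)ᵀ * M - M * shiftMatrix F n).rank + 1 :=
  stein_rank_of_MJ_le_general F n M
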